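/- arXiv:1702.02596 — 2 statements merged into one kernel-verified Lean document; each statement's English description precedes it below -/
import Mathlib

section
/- In the two-alphabet model, with finite sets K*, K, a map γ : K* → K and a surjective relation J : K* → K, set G = γ ∘ J⁻¹ and G* = J⁻¹ ∘ γ. Then γ induces a bijection from the basic sets of G* to the basic sets of G: if B* is a G* basic set then γ(B*) is a G basic set, and the inverse sends a G basic set B to γ⁻¹(B) ∩ J⁻¹(B). -/
/-- `B` is a basic set (chain component) of a relation `R` on a finite set. -/
def IsBasicSetRel {K : Type*} (R : K → K → Prop) (B : Set K) : Prop :=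
  ∃ s, Relation.TransGen R s s ∧
    B = {t | Relation.TransGen R s t ∧ Relation.TransGen R t s}

section Aux

variable {Ks K : Type*} {γ : Ks → K} {J : Ks → K → Prop}
  {G : K → K → Prop} {Gs : Ks → Ks → Prop}

private lemma morph (hG : ∀ s t, G s t ↔ ∃ s', J s' s ∧ γ s' = t)
    (hGs : ∀ s₁ s₂, Gs s₁ s₂ ↔ J s₂ (γ s₁))
    {a b : Ks} (h : Relation.TransGen Gs a b) :
    Relation.TransGen G (γ a) (γ b) := by
  induction h with
  | single h => exact Relation.TransGen.single ((hG _ _).2 ⟨_, (hGs _ _).1 h, rfl⟩)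
  | tail h₁ h₂ ih => exact ih.tail ((hG _ _).2 ⟨_, (hGs _ _).1 h₂, rfl⟩)

private lemma lift (hG : ∀ s t, G s t ↔ ∃ s', J s' s ∧ γ s' = t)
    (hGs : ∀ s₁ s₂, Gs s₁ s₂ ↔ J s₂ (γ s₁))
    {u v : K} (h : Relation.TransGen G u v) :
    ∀ a, γ a = u → ∃ b, Relation.TransGen Gs a b ∧ γ b = v := by
  induction h with
  | single h =>
    intro a ha
    obtain ⟨s', hJ, hγ⟩ := (hG _ _).1 h
    exact ⟨s', Relation.TransGen.single ((hGs _ _).2 (by rw [ha]; exact hJ)), hγ⟩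
  | tail h₁ h₂ ih =>
    intro a ha
    obtain ⟨b, hab, hb⟩ := ih a ha
    obtain ⟨s', hJ, hγ⟩ := (hG _ _).1 h₂
    exact ⟨s', hab.tail ((hGs _ _).2 (by rw [hb]; exact hJ)), hγ⟩

/-- `Gs` only depends on the `γ`-image of the source. -/
private lemma swap (hGs : ∀ s₁ s₂, Gs s₁ s₂ ↔ J s₂ (γ s₁))
    {a b c : Ks} (hab : γ a = γ b)
    (h : Relation.TransGen Gs a c) : Relation.TransGen Gs b c := by
  induction h with
  | single h => exact Relation.TransGen.single ((hGs _ _).2 (hab ▸ (hGs _ _).1 h))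
  | tail h₁ h₂ ih => exact ih.tail h₂

private lemma main2 (hG : ∀ s t, G s t ↔ ∃ s', J s' s ∧ γ s' = t)
    (hGs : ∀ s₁ s₂, Gs s₁ s₂ ↔ J s₂ (γ s₁))
    {u : K} (huu : Relation.TransGen G u u) :
    ∃ s₁ : Ks, γ s₁ = u ∧ Relation.TransGen Gs s₁ s₁ ∧
      (γ ⁻¹' {t | Relation.TransGen G u t ∧ Relation.TransGen G t u} ∩
        {s' | ∃ s ∈ {t | Relation.TransGen G u t ∧ Relation.TransGen G t u}, J s' s})
        = {t | Relation.TransGen Gs s₁ t ∧ Relation.TransGen Gs t s₁} := by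
  obtain ⟨w, -, hwu⟩ := (Relation.TransGen.tail'_iff).1 huu
  obtain ⟨s₀, -, hs₀⟩ := (hG _ _).1 hwu
  obtain ⟨s₁, hs₀₁, hs₁⟩ := lift hG hGs huu s₀ hs₀
  have hper : Relation.TransGen Gs s₁ s₁ := swap hGs (hs₀.trans hs₁.symm) hs₀₁
  refine ⟨s₁, hs₁, hper, ?_⟩
  ext t
  simp only [Set.mem_inter_iff, Set.mem_preimage, Set.mem_setOf_eq]
  constructor
  · rintro ⟨hγt, s, ⟨hus, hsu⟩, hJ⟩
    constructor
    · obtain ⟨s', h₁, h₂⟩ := lift hG hGs hus s₁ hs₁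
      exact h₁.tail ((hGs _ _).2 (by rw [h₂]; exact hJ))
    · obtain ⟨t', h₁, h₂⟩ := lift hG hGs hγt.2 t rfl
      exact h₁.trans (swap hGs (hs₁.trans h₂.symm) hper)
  · rintro ⟨h₁, h₂⟩
    refine ⟨⟨hs₁ ▸ morph hG hGs h₁, hs₁ ▸ morph hG hGs h₂⟩, ?_⟩
    obtain ⟨y, hy, hyt⟩ := (Relation.TransGen.tail'_iff).1 h₁
    rcases (Relation.reflTransGen_iff_eq_or_transGen).1 hy with rfl | hy'
    · exact ⟨u, ⟨huu, huu⟩, hs₁ ▸ (hGs _ _).1 hyt⟩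
    · exact ⟨γ y, ⟨hs₁ ▸ morph hG hGs hy',
        hs₁ ▸ morph hG hGs ((Relation.TransGen.single hyt).trans h₂)⟩, (hGs _ _).1 hyt⟩

end Aux

/-- in the two-alphabet model (finite `K*`, `K`, a map
`γ : K* → K`, a surjective relation `J : K* → K`, with `G = γ∘J⁻¹` and
`G* = J⁻¹∘γ`), `γ` induces a bijection between the basic sets of `G*` and
those of `G`: `B* ↦ γ(B*)` with inverse `B ↦ γ⁻¹(B) ∩ J⁻¹(B)`. -/
theorem stmt_15 {Ks K : Type*} [Fintype Ks] [Fintype K]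
    (γ : Ks → K) (J : Ks → K → Prop)
    (hJdom : ∀ s', ∃ s, J s' s) (hJsurj : ∀ s, ∃ s', J s' s)
    (G : K → K → Prop) (hG : ∀ s t, G s t ↔ ∃ s', J s' s ∧ γ s' = t)
    (Gs : Ks → Ks → Prop) (hGs : ∀ s₁ s₂, Gs s₁ s₂ ↔ J s₂ (γ s₁)) :
    (∀ Bs : Set Ks, IsBasicSetRel Gs Bs → IsBasicSetRel G (γ '' Bs)) ∧
    (∀ B : Set K, IsBasicSetRel G B →
      IsBasicSetRel Gs (γ ⁻¹' B ∩ {s' | ∃ s ∈ B, J s' s})) ∧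
    (∀ Bs : Set Ks, IsBasicSetRel Gs Bs →
      γ ⁻¹' (γ '' Bs) ∩ {s' | ∃ s ∈ γ '' Bs, J s' s} = Bs) ∧
    (∀ B : Set K, IsBasicSetRel G B →
      γ '' (γ ⁻¹' B ∩ {s' | ∃ s ∈ B, J s' s}) = B) := by
  refine ⟨?_, ?_, ?_, ?_⟩
  · rintro Bs ⟨s, hss, rfl⟩
    refine ⟨γ s, morph hG hGs hss, ?_⟩
    ext u
    simp only [Set.mem_image, Set.mem_setOf_eq]
    constructor
    · rintro ⟨t, ⟨h₁, h₂⟩, rfl⟩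
      exact ⟨morph hG hGs h₁, morph hG hGs h₂⟩
    · rintro ⟨h₁, h₂⟩
      obtain ⟨t, hst, rfl⟩ := lift hG hGs h₁ s rfl
      obtain ⟨t', htt', ht'⟩ := lift hG hGs h₂ t rfl
      exact ⟨t, ⟨hst, htt'.trans (swap hGs ht'.symm hss)⟩, rfl⟩
  · rintro B ⟨u, huu, rfl⟩
    obtain ⟨s₁, hs₁, hper, heq⟩ := main2 hG hGs huu
    exact ⟨s₁, hper, heq⟩
  · rintro Bs ⟨s, hss, rfl⟩
    ext t
    simp only [Set.mem_inter_iff, Set.mem_preimage, Set.mem_image, Set.mem_setOf_eq]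
    constructor
    · rintro ⟨⟨b, ⟨hb₁, hb₂⟩, hbt⟩, s', ⟨c, ⟨hc₁, hc₂⟩, rfl⟩, hJ⟩
      exact ⟨hc₁.tail ((hGs _ _).2 hJ), swap hGs hbt hb₂⟩
    · rintro ⟨h₁, h₂⟩
      refine ⟨⟨t, ⟨h₁, h₂⟩, rfl⟩, ?_⟩
      obtain ⟨y, hy, hyt⟩ := Relation.TransGen.tail'_iff.1 h₁
      rcases Relation.reflTransGen_iff_eq_or_transGen.1 hy with rfl | hy'
      · exact ⟨γ y, ⟨y, ⟨hss, hss⟩, rfl⟩, (hGs _ _).1 hyt⟩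
      · exact ⟨γ y, ⟨y, ⟨hy', (Relation.TransGen.single hyt).trans h₂⟩, rfl⟩,
          (hGs _ _).1 hyt⟩
  · rintro B ⟨u, huu, rfl⟩
    obtain ⟨s₁, hs₁, hper, heq⟩ := main2 hG hGs huu
    rw [heq]
    ext v
    simp only [Set.mem_image, Set.mem_setOf_eq]
    constructor
    · rintro ⟨t, ⟨h₁, h₂⟩, rfl⟩
      exact ⟨hs₁ ▸ morph hG hGs h₁, hs₁ ▸ morph hG hGs h₂⟩
    · rintro ⟨h₁, h₂⟩
      obtain ⟨t, hst, rfl⟩ := lift hG hGs h₁ s₁ hs₁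
      obtain ⟨t', htt', ht'⟩ := lift hG hGs h₂ t rfl
      exact ⟨t, ⟨hst, htt'.trans (swap hGs (hs₁.trans ht'.symm) hper)⟩, rfl⟩
end

section
/- In the two-alphabet model with associated basic sets B* (of G* = J⁻¹∘γ) and B = γ(B*) (of G = γ∘J⁻¹), the following are equivalent: (i) B* is terminal; (ii) G*(B*) = B*; (iii) B is terminal; (iv) G(B) = B; (v) J⁻¹(B) = B*. -/
/-- `B` is terminal for `R`: `𝒪R(B) ⊆ B`. -/
def IsTerminal {K : Type*} (R : K → K → Prop) (B : Set K) : Prop :=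
  ∀ s ∈ B, ∀ t, Relation.TransGen R s t → t ∈ B

/-- Every element of a basic set has a predecessor inside the basic set. -/
lemma exists_pred {K : Type*} (R : K → K → Prop) (s₀ : K)
    (hcyc : Relation.TransGen R s₀ s₀)
    (t : K) (ht : Relation.TransGen R s₀ t ∧ Relation.TransGen R t s₀) :
    ∃ p, (Relation.TransGen R s₀ p ∧ Relation.TransGen R p s₀) ∧ R p t := by
  obtain ⟨p, hp, hpt⟩ := (Relation.TransGen.tail'_iff).mp ht.1
  exact ⟨p, ⟨hcyc.trans_left hp, Relation.TransGen.head hpt ht.2⟩, hpt⟩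

/-- in the two-alphabet model, for associated basic sets `B*`
of `G* = J⁻¹∘γ` and `B = γ(B*)` of `G = γ∘J⁻¹`, the following are equivalent:
(i) `B*` is terminal; (ii) `G*(B*) = B*`; (iii) `B` is terminal;
(iv) `G(B) = B`; (v) `J⁻¹(B) = B*`. -/
theorem stmt_16 {Ks K : Type*} [Fintype Ks] [Fintype K]
    (γ : Ks → K) (J : Ks → K → Prop)
    (hJdom : ∀ s', ∃ s, J s' s) (hJsurj : ∀ s, ∃ s', J s' s)
    (G : K → K → Prop) (hG : ∀ s t, G s t ↔ ∃ s', J s' s ∧ γ s' = t)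
    (Gs : Ks → Ks → Prop) (hGs : ∀ s₁ s₂, Gs s₁ s₂ ↔ J s₂ (γ s₁))
    (Bs : Set Ks) (hBs : IsBasicSetRel Gs Bs)
    (B : Set K) (hB : B = γ '' Bs) :
    List.TFAE [IsTerminal Gs Bs,
      {t | ∃ s ∈ Bs, Gs s t} = Bs,
      IsTerminal G B,
      {t | ∃ s ∈ B, G s t} = B,
      {s' | ∃ s ∈ B, J s' s} = Bs] := by
  obtain ⟨s₀, hcyc, hBseq⟩ := hBs
  -- membership criterion for Bs
  have hmem : ∀ t, t ∈ Bs ↔ Relation.TransGen Gs s₀ t ∧ Relation.TransGen Gs t s₀ := by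
    intro t; rw [hBseq]; rfl
  -- lift a reachability in G starting at γ a to one in Gs
  have lift : ∀ a t, Relation.TransGen G (γ a) t →
      ∃ b, Relation.TransGen Gs a b ∧ γ b = t := by
    intro a t h
    induction h with
    | single h =>
        obtain ⟨s', hJ, hγ⟩ := (hG _ _).mp h
        exact ⟨s', Relation.TransGen.single ((hGs _ _).mpr hJ), hγ⟩
    | tail _ h ih =>
        obtain ⟨b, hb, rfl⟩ := ih
        obtain ⟨s', hJ, hγ⟩ := (hG _ _).mp h
        exact ⟨s', hb.tail ((hGs _ _).mpr hJ), hγ⟩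
  tfae_have 1 → 2 := by
    intro h1
    ext t
    constructor
    · rintro ⟨s, hs, hst⟩
      exact h1 s hs t (Relation.TransGen.single hst)
    · intro ht
      obtain ⟨p, hp, hpt⟩ := exists_pred Gs s₀ hcyc t ((hmem t).mp ht)
      exact ⟨p, (hmem p).mpr hp, hpt⟩
  tfae_have 2 → 1 := by
    intro h2 s hs t hst
    induction hst with
    | single h => rw [← h2]; exact ⟨s, hs, h⟩
    | tail _ h ih => rw [← h2]; exact ⟨_, ih, h⟩
  tfae_have 1 → 3 := by
    intro h1 t ht u htu
    rw [hB] at ht ⊢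
    obtain ⟨s, hs, rfl⟩ := ht
    obtain ⟨b, hb, rfl⟩ := lift s u htu
    exact ⟨b, h1 s hs b hb, rfl⟩
  tfae_have 3 → 4 := by
    intro h3
    ext t
    constructor
    · rintro ⟨s, hs, hst⟩
      exact h3 s hs t (Relation.TransGen.single hst)
    · intro ht
      obtain ⟨s, hs, rfl⟩ := hB ▸ ht
      obtain ⟨p, hp, hpt⟩ := exists_pred Gs s₀ hcyc s ((hmem s).mp hs)
      refine ⟨γ p, hB ▸ ⟨p, (hmem p).mpr hp, rfl⟩, (hG _ _).mpr ⟨s, (hGs _ _).mp hpt, rfl⟩⟩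
  tfae_have 4 → 5 := by
    intro h4
    ext s'
    constructor
    · rintro ⟨s, hs, hJ⟩
      -- γ s' is in the G-image of B, hence in B
      have hγs' : γ s' ∈ B := by
        rw [← h4]; exact ⟨s, hs, (hG _ _).mpr ⟨s', hJ, rfl⟩⟩
      obtain ⟨b, hb, hbs'⟩ := hB ▸ hγs'
      refine (hmem s').mpr ⟨?_, ?_⟩
      · -- reach s' : s = γ p with p ∈ Bs, and Gs p s'
        obtain ⟨p, hp, rfl⟩ := hB ▸ hs
        exact ((hmem p).mp hp).1.tail ((hGs _ _).mpr hJ)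
      · -- return from s' : first step from b only depends on γ b = γ s'
        obtain ⟨c, hbc, hcs₀⟩ := (Relation.TransGen.head'_iff).mp ((hmem b).mp hb).2
        have : Gs s' c := (hGs _ _).mpr (hbs' ▸ (hGs _ _).mp hbc)
        exact Relation.TransGen.head' this hcs₀
    · intro hs'
      obtain ⟨p, hp, hpt⟩ := exists_pred Gs s₀ hcyc s' ((hmem s').mp hs')
      exact ⟨γ p, hB ▸ ⟨p, (hmem p).mpr hp, rfl⟩, (hGs _ _).mp hpt⟩
  tfae_have 5 → 1 := by
    intro h5 s hs t hst
    induction hst with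
    | single h =>
        rw [← h5]
        exact ⟨γ s, hB ▸ ⟨s, hs, rfl⟩, (hGs _ _).mp h⟩
    | tail _ h ih =>
        rw [← h5]
        exact ⟨γ _, hB ▸ ⟨_, ih, rfl⟩, (hGs _ _).mp h⟩
  tfae_finish
end
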